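/- Let n ≥ 5 and let G be an n-vertex unicyclic graph. Let U_2 be the n-vertex unicyclic graph obtained from the path v_1 v_2 … v_n by adding the edge v_1 v_3. Then τ(G) ≤ τ(U_2); that is, U_2 has the maximal total-eccentricity index among all n-vertex unicyclic graphs. -/

import Mathlib

/-!
`τ(U₂)` satisfies `τ(U₂ on n + 1 vertices) = τ(U₂ on n vertices) + n + ⌊n / 2⌋`, and the upper
bound is an induction on `n` showing that a unicyclic graph with a pendant vertex obeys the same
recursion as an inequality. Delete a pendant vertex `u` with neighbour `z`, leaving a unicyclic
`G'`. For `v ≠ u` we have `e_G(v) ≤ max (e_{G'}(v), d_{G'}(v, z) + 1)`, so `e_G(v)` can exceed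
`e_{G'}(v)` only when `z` is a farthest vertex from `v`. Such vertices are at distance at least
`⌈e_{G'}(z) / 2⌉` from `z`, and `e_G(u) ≤ e_{G'}(z) + 1`, so the recursion follows because
`e_{G'}(z) ≤ n - 3`. If `G'` is a cycle, a Hamiltonian cycle through `z` bounds every eccentricity
directly. A unicyclic graph without pendant vertices is a cycle, and `τ(Cₙ) ≤ τ(U₂)` for `n ≥ 5`.
For the lower bound, `v_j ↦ j` (with `v₁ ↦ 2`) changes by at most one along the edges of `U₂`,
so it bounds the distances of `U₂` from below.
-/

open SimpleGraph Finset

/-- The eccentricity of a vertex `v` in a graph `G`: the maximum distance from `v`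
to any vertex of `G`. -/
noncomputable def ecc {V : Type} [Fintype V] (G : SimpleGraph V) (v : V) : ℕ :=
  Finset.univ.sup fun w => G.dist v w

/-- The total-eccentricity index `τ(G) = ∑_{v ∈ V(G)} e_G(v)`. -/
noncomputable def totalEcc {V : Type} [Fintype V] (G : SimpleGraph V) : ℕ :=
  ∑ v : V, ecc G v

-- The eccentricity of the vertex `j` (the paper's `v_{j+1}`) of `U₂`: a farthest vertex is
-- `v_n`, or `v₁` once `2 j > n`.
def eccU₂ (n j : ℕ) : ℕ := if j = 0 then n - 2 else if 2 * j ≤ n then n - 1 - j else j - 1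

def tauU₂ (n : ℕ) : ℕ := ∑ j ∈ range n, eccU₂ n j

lemma eccU₂_succ {n j : ℕ} (hn : 2 ≤ n) (hj : j < n) :
    eccU₂ (n + 1) j = eccU₂ n j + if 2 * j ≤ n then 1 else 0 := by
  unfold eccU₂
  split_ifs <;> omega

lemma tauU₂_succ {n : ℕ} (hn : 2 ≤ n) : tauU₂ (n + 1) = tauU₂ n + n + n / 2 := by
  have hhalf : #{j ∈ range n | 2 * j ≤ n} = n / 2 + 1 := by
    rw [show {j ∈ range n | 2 * j ≤ n} = range (n / 2 + 1) by ext; simp; omega, card_range]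
  have hlast : eccU₂ (n + 1) n = n - 1 := by
    unfold eccU₂
    split_ifs <;> omega
  rw [tauU₂, sum_range_succ, hlast, sum_congr rfl fun j hj => eccU₂_succ hn (mem_range.mp hj),
    sum_add_distrib, sum_boole, hhalf, tauU₂]
  push_cast
  omega

lemma mul_half_le_tauU₂ {n : ℕ} (hn : 5 ≤ n) : n * (n / 2) ≤ tauU₂ n := by
  induction n using Nat.strong_induction_on with
  | _ n ih =>
    rcases (show n = 5 ∨ n = 6 ∨ 7 ≤ n by omega) with rfl | rfl | h7
    · decide
    · decide
    obtain ⟨m, rfl⟩ : ∃ m, n = m + 2 := ⟨n - 2, by omega⟩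
    have := ih m (by omega) (by omega)
    have : (m + 2) * ((m + 2) / 2) = m * (m / 2) + m + 2 * (m / 2) + 2 := by
      rw [show (m + 2) / 2 = m / 2 + 1 by omega]
      ring
    rw [tauU₂_succ (by omega), tauU₂_succ (by omega)]
    omega

lemma mul_half_add_half_add_three_le_tauU₂_succ {m : ℕ} (hm : 3 ≤ m) :
    m * (m / 2) + m / 2 + 3 ≤ tauU₂ (m + 1) := by
  rw [tauU₂_succ (by omega)]
  rcases (show m = 3 ∨ m = 4 ∨ 5 ≤ m by omega) with rfl | rfl | h5
  · decide
  · decide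
  · have := mul_half_le_tauU₂ h5
    omega

namespace SimpleGraph

variable {V W : Type} {G : SimpleGraph V}

lemma ncard_edgeSet_eq_card_edgeFinset (G : SimpleGraph V) [Fintype G.edgeSet] :
    G.edgeSet.ncard = #G.edgeFinset :=
  Set.ncard_eq_toFinset_card' _

lemma Hom.dist_map_le {H : SimpleGraph W} (f : G →g H) {a b : V} (h : G.Reachable a b) :
    H.dist (f a) (f b) ≤ G.dist a b := by
  obtain ⟨p, hp⟩ := h.exists_walk_length_eq_dist
  rw [← hp, ← p.length_map f]
  exact dist_le _

lemma Reachable.le_add_dist {φ : V → ℤ} (hφ : ∀ a b, G.Adj a b → φ a ≤ φ b + 1) {a b : V}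
    (h : G.Reachable a b) : φ a ≤ φ b + G.dist a b := by
  obtain ⟨p, hp⟩ := h.exists_walk_length_eq_dist
  rw [← hp]
  clear hp h
  induction p with
  | nil => simp
  | cons hadj p ih =>
    rw [Walk.length_cons]
    push_cast
    linarith [hφ _ _ hadj]

lemma dist_le_dist_induce_compl_singleton {u : V} (h' : (G.induce {u}ᶜ).Connected)
    (v w : ({u}ᶜ : Set V)) : G.dist v w ≤ (G.induce {u}ᶜ).dist v w :=
  (Embedding.induce _).toHom.dist_map_le (h'.preconnected v w)

end SimpleGraph

lemma card_compl_singleton {V : Type} [Fintype V] [DecidableEq V] (u : V) :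
    Fintype.card ({u}ᶜ : Set V) = Fintype.card V - 1 := by
  rw [Fintype.card_compl_set, Set.card_singleton]

section Eccentricity

variable {V : Type} [Fintype V] {G : SimpleGraph V}

lemma dist_le_ecc (v w : V) : G.dist v w ≤ ecc G v := le_sup (mem_univ w)

lemma ecc_le_iff {v : V} {k : ℕ} : ecc G v ≤ k ↔ ∀ w, G.dist v w ≤ k := by
  simp [ecc]

lemma exists_dist_eq_ecc [Nonempty V] (v : V) : ∃ w, G.dist v w = ecc G v := by
  obtain ⟨w, -, hw⟩ := exists_mem_eq_sup univ univ_nonempty (G.dist v)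
  exact ⟨w, hw.symm⟩

lemma card_filter_dist_eq_ecc_add_le (hG : G.Connected) (z : V) :
    #{v | G.dist v z = ecc G v} + (ecc G z + 1) / 2 ≤ Fintype.card V := by
  classical
  have := hG.nonempty
  obtain ⟨w, hw⟩ := exists_dist_eq_ecc (G := G) z
  obtain ⟨p, hp, hlen⟩ := hG.exists_path_of_dist z w
  set k := (ecc G z + 1) / 2
  -- The first `k` vertices of a shortest path from `z` to a farthest vertex `w` are nearer to
  -- `w` than to `z`.
  have hfar : ∀ j < k, G.dist (p.getVert j) z ≠ ecc G (p.getVert j) := by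
    intro j hj h
    have h1 : G.dist z (p.getVert j) ≤ j :=
      (dist_le (p.take j)).trans (by simp [Walk.take_length])
    have h2 : G.dist z w ≤ G.dist z (p.getVert j) + G.dist (p.getVert j) w := hG.dist_triangle
    have h3 := dist_le_ecc (G := G) (p.getVert j) w
    rw [dist_comm] at h
    omega
  have hinj : Set.InjOn p.getVert (range k) :=
    hp.getVert_injOn.mono fun j hj => by simp only [coe_range, Set.mem_Iio] at hj; simp; omega
  have hdisj : Disjoint ({v | G.dist v z = ecc G v} : Finset V) ((range k).image p.getVert) := by
    rw [disjoint_right]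
    rintro _ hv
    obtain ⟨j, hj, rfl⟩ := mem_image.mp hv
    simpa using hfar j (mem_range.mp hj)
  calc #{v | G.dist v z = ecc G v} + k
      = #(({v | G.dist v z = ecc G v} : Finset V) ∪ (range k).image p.getVert) := by
        rw [card_union_of_disjoint hdisj, card_image_of_injOn hinj, card_range]
    _ ≤ Fintype.card V := card_le_univ _

end Eccentricity

namespace SimpleGraph

variable {V : Type} {G : SimpleGraph V}

lemma Connected.exists_isHamiltonianCycle_of_isCycles [Finite V] [DecidableEq V] [Nontrivial V]
    (hG : G.Connected) (hcyc : G.IsCycles) (z : V) : ∃ p : G.Walk z z, p.IsHamiltonianCycle := by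
  obtain ⟨w, hw⟩ := exists_ne z
  obtain ⟨p, hp, hverts⟩ :=
    hcyc.exists_cycle_toSubgraph_verts_eq_connectedComponentSupp (c := G.connectedComponentMk z)
      rfl ((hG.preconnected z w).nonempty_neighborSet_left hw.symm)
  refine ⟨p, Walk.isHamiltonianCycle_iff_isCycle_and_support_count_tail_eq_one.mpr
    ⟨hp, fun v => List.count_eq_one_of_mem hp.support_nodup ?_⟩⟩
  have hv : v ∈ p.support := by
    rw [← Walk.mem_verts_toSubgraph, hverts, ConnectedComponent.mem_supp_iff,
      ConnectedComponent.eq]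
    exact hG.preconnected v z
  rcases (Walk.mem_support_iff p).mp hv with rfl | hv
  · exact Walk.end_mem_tail_support hp.not_nil
  · exact hv

namespace Walk

variable [Fintype V] [DecidableEq V] {z : V} {p : G.Walk z z}

lemma IsHamiltonianCycle.dist_add_length_takeUntil_le (hp : p.IsHamiltonianCycle) (v : V) :
    G.dist z v + (p.takeUntil v (hp.mem_support v)).length ≤ Fintype.card V := by
  have h := congrArg Walk.length (p.take_spec (hp.mem_support v))
  rw [length_append, hp.length_eq] at h
  have := dist_le (p.dropUntil v (hp.mem_support v))
  rw [dist_comm] at this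
  omega

lemma IsHamiltonianCycle.two_mul_dist_le (hp : p.IsHamiltonianCycle) (v : V) :
    2 * G.dist z v ≤ Fintype.card V := by
  have := dist_le (p.takeUntil v (hp.mem_support v))
  have := hp.dist_add_length_takeUntil_le v
  omega

lemma IsHamiltonianCycle.card_filter_dist_eq_le_two (hp : p.IsHamiltonianCycle) {k : ℕ}
    (hk : Fintype.card V ≤ 2 * k + 1) : #{v | G.dist z v = k} ≤ 2 := by
  calc #{v | G.dist z v = k}
      ≤ #(Icc k (k + 1)) := by
        refine card_le_card_of_injOn (fun v => (p.takeUntil v (hp.mem_support v)).length) ?_ ?_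
        · intro v hv
          have := dist_le (p.takeUntil v (hp.mem_support v))
          have := hp.dist_add_length_takeUntil_le v
          simp only [coe_filter, mem_univ, true_and, Set.mem_ofPred_eq] at hv
          simp only [coe_Icc, Set.mem_Icc]
          omega
        · intro v _ w _ h
          simpa only [getVert_length_takeUntil] using congrArg p.getVert h
    _ = 2 := by rw [Nat.card_Icc]; omega

end Walk

variable [Fintype V] [Nontrivial V]

lemma Connected.two_mul_ecc_le_of_isCycles (hG : G.Connected) (hcyc : G.IsCycles) (z : V) :
    2 * ecc G z ≤ Fintype.card V := by
  classical
  obtain ⟨p, hp⟩ := hG.exists_isHamiltonianCycle_of_isCycles hcyc z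
  obtain ⟨w, hw⟩ := exists_dist_eq_ecc (G := G) z
  exact hw ▸ hp.two_mul_dist_le w

lemma Connected.totalEcc_le_of_isCycles (hG : G.Connected) (hcyc : G.IsCycles) :
    totalEcc G ≤ Fintype.card V * (Fintype.card V / 2) := by
  calc totalEcc G ≤ ∑ _v : V, Fintype.card V / 2 :=
        sum_le_sum fun v _ => by have := hG.two_mul_ecc_le_of_isCycles hcyc v; omega
    _ = Fintype.card V * (Fintype.card V / 2) := by simp

end SimpleGraph

section PendantDeletion

variable {V : Type} [Fintype V] [DecidableEq V] {G : SimpleGraph V} {u z : V}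

lemma ecc_le_max_of_adj (h' : (G.induce {u}ᶜ).Connected) (huz : G.Adj u z)
    (v : ({u}ᶜ : Set V)) :
    ecc G v ≤ max (ecc (G.induce {u}ᶜ) v) ((G.induce {u}ᶜ).dist v ⟨z, huz.ne'⟩ + 1) := by
  rw [ecc_le_iff]
  intro w
  by_cases hw : w = u
  · subst hw
    have h1 := huz.symm.reachable.dist_triangle_right (v : V)
    have h2 : G.dist v z ≤ _ := dist_le_dist_induce_compl_singleton h' v ⟨z, huz.ne'⟩
    rw [dist_eq_one_iff_adj.mpr huz.symm] at h1
    omega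
  · exact (dist_le_dist_induce_compl_singleton h' v ⟨w, hw⟩).trans
      ((dist_le_ecc _ _).trans (le_max_left _ _))

lemma ecc_le_ecc_induce_add_one (h' : (G.induce {u}ᶜ).Connected) (huz : G.Adj u z) :
    ecc G u ≤ ecc (G.induce {u}ᶜ) ⟨z, huz.ne'⟩ + 1 := by
  rw [ecc_le_iff]
  intro w
  by_cases hw : w = u
  · simp [hw]
  · have h1 := huz.reachable.dist_triangle_left w
    have h2 : G.dist z w ≤ _ := dist_le_dist_induce_compl_singleton h' ⟨z, huz.ne'⟩ ⟨w, hw⟩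
    have h3 := dist_le_ecc (G := G.induce {u}ᶜ) ⟨z, huz.ne'⟩ ⟨w, hw⟩
    rw [dist_eq_one_iff_adj.mpr huz] at h1
    omega

lemma totalEcc_eq_ecc_add_sum (u : V) :
    totalEcc G = ecc G u + ∑ v : ({u}ᶜ : Set V), ecc G v :=
  Fintype.sum_eq_add_sum_subtype_ne _ u

lemma totalEcc_add_le_of_adj (h' : (G.induce {u}ᶜ).Connected) (huz : G.Adj u z) :
    totalEcc G + (ecc (G.induce {u}ᶜ) ⟨z, huz.ne'⟩ + 1) / 2 ≤
      totalEcc (G.induce {u}ᶜ) + Fintype.card ({u}ᶜ : Set V) +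
        ecc (G.induce {u}ᶜ) ⟨z, huz.ne'⟩ + 1 := by
  set G' := G.induce {u}ᶜ
  set z' : ({u}ᶜ : Set V) := ⟨z, huz.ne'⟩
  have hpoint : ∀ v : ({u}ᶜ : Set V),
      ecc G v ≤ ecc G' v + if G'.dist v z' = ecc G' v then 1 else 0 := by
    intro v
    have h1 : ecc G v ≤ max (ecc G' v) (G'.dist v z' + 1) := ecc_le_max_of_adj h' huz v
    have h2 := dist_le_ecc (G := G') v z'
    split_ifs <;> omega
  have hsum : ∑ v : ({u}ᶜ : Set V), ecc G v ≤ totalEcc G' + #{v | G'.dist v z' = ecc G' v} := by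
    calc ∑ v : ({u}ᶜ : Set V), ecc G v
        ≤ ∑ v, (ecc G' v + if G'.dist v z' = ecc G' v then 1 else 0) :=
          sum_le_sum fun v _ => hpoint v
      _ = totalEcc G' + #{v | G'.dist v z' = ecc G' v} := by
        rw [sum_add_distrib, sum_boole, Nat.cast_id, totalEcc]
  have hfar := card_filter_dist_eq_ecc_add_le h' z'
  have hu : ecc G u ≤ ecc G' z' + 1 := ecc_le_ecc_induce_add_one h' huz
  rw [totalEcc_eq_ecc_add_sum u]
  omega

lemma totalEcc_le_of_adj_of_isCycles [Nontrivial ({u}ᶜ : Set V)]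
    (h' : (G.induce {u}ᶜ).Connected) (huz : G.Adj u z) (hcyc : (G.induce {u}ᶜ).IsCycles) :
    totalEcc G ≤ Fintype.card ({u}ᶜ : Set V) * (Fintype.card ({u}ᶜ : Set V) / 2) +
      Fintype.card ({u}ᶜ : Set V) / 2 + 3 := by
  set G' := G.induce {u}ᶜ
  set z' : ({u}ᶜ : Set V) := ⟨z, huz.ne'⟩
  set M := Fintype.card ({u}ᶜ : Set V)
  obtain ⟨p, hp⟩ := h'.exists_isHamiltonianCycle_of_isCycles hcyc z'
  have hpoint : ∀ v : ({u}ᶜ : Set V),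
      ecc G v ≤ M / 2 + if G'.dist z' v = M / 2 then 1 else 0 := by
    intro v
    have h1 : ecc G v ≤ max (ecc G' v) (G'.dist v z' + 1) := ecc_le_max_of_adj h' huz v
    have h2 := h'.two_mul_ecc_le_of_isCycles hcyc v
    have h3 := hp.two_mul_dist_le v
    rw [dist_comm] at h1
    split_ifs <;> omega
  have hsum : ∑ v : ({u}ᶜ : Set V), ecc G v ≤ M * (M / 2) + #{v | G'.dist z' v = M / 2} := by
    calc ∑ v : ({u}ᶜ : Set V), ecc G v
        ≤ ∑ v, (M / 2 + if G'.dist z' v = M / 2 then 1 else 0) := sum_le_sum fun v _ => hpoint v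
      _ = M * (M / 2) + #{v | G'.dist z' v = M / 2} := by
        rw [sum_add_distrib, sum_boole, Nat.cast_id, sum_const, card_univ, smul_eq_mul]
  have hD := hp.card_filter_dist_eq_le_two (k := M / 2) (by omega)
  have hu : ecc G u ≤ ecc G' z' + 1 := ecc_le_ecc_induce_add_one h' huz
  have hz := h'.two_mul_ecc_le_of_isCycles hcyc z'
  rw [totalEcc_eq_ecc_add_sum u]
  omega

end PendantDeletion

namespace SimpleGraph

structure IsUnicyclic {V : Type} [Fintype V] (G : SimpleGraph V) : Prop where
  connected : G.Connected
  ncard_edgeSet : G.edgeSet.ncard = Fintype.card V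

lemma adj_of_neighborSet_eq_singleton {V : Type} {G : SimpleGraph V} {u z : V}
    (hu : G.neighborSet u = {z}) : G.Adj u z := by
  rw [← mem_neighborSet, hu]
  rfl

namespace IsUnicyclic

variable {V : Type} [Fintype V] {G : SimpleGraph V}

lemma three_le_card (hG : G.IsUnicyclic) : 3 ≤ Fintype.card V := by
  classical
  have h1 := G.card_edgeFinset_le_card_choose_two
  rw [← ncard_edgeSet_eq_card_edgeFinset, hG.ncard_edgeSet] at h1
  have h2 : 0 < Fintype.card V := Fintype.card_pos_iff.mpr hG.connected.nonempty
  by_contra h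
  interval_cases (Fintype.card V) <;> simp at h1

lemma induce_compl_singleton [DecidableEq V] (hG : G.IsUnicyclic) {u z : V}
    (hu : G.neighborSet u = {z}) : (G.induce {u}ᶜ).IsUnicyclic := by
  classical
  have hdeg : G.degree u = 1 := by
    rw [← card_neighborSet_eq_degree]
    simp [hu]
  refine ⟨hG.connected.induce_compl_singleton_of_degree_eq_one hdeg, ?_⟩
  rw [ncard_edgeSet_eq_card_edgeFinset, card_edgeFinset_induce_compl_singleton,
    card_edgeFinset_deleteIncidenceSet, ← ncard_edgeSet_eq_card_edgeFinset, hG.ncard_edgeSet, hdeg,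
    card_compl_singleton]

lemma exists_neighborSet_eq_singleton_or_isCycles (hG : G.IsUnicyclic) :
    (∃ u z, G.neighborSet u = {z}) ∨ G.IsCycles := by
  classical
  refine or_iff_not_imp_left.mpr fun hpend => ?_
  simp only [not_exists] at hpend
  have : Nontrivial V := Fintype.one_lt_card_iff_nontrivial.mp (by have := hG.three_le_card; omega)
  have hdeg2 : ∀ v, 2 ≤ G.degree v := by
    intro v
    have hpos := hG.connected.preconnected.degree_pos_of_nontrivial v
    have hne1 : G.degree v ≠ 1 := by
      intro h1
      obtain ⟨z, hz⟩ := card_eq_one.mp h1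
      exact hpend v z (by simpa [← coe_neighborFinset] using hz)
    omega
  have hsum : ∑ v, G.degree v = ∑ _v : V, 2 := by
    rw [sum_degrees_eq_twice_card_edges, ← ncard_edgeSet_eq_card_edgeFinset, hG.ncard_edgeSet]
    simp [mul_comm]
  intro v _
  have hdeg := (sum_eq_sum_iff_of_le fun v _ => hdeg2 v).mp hsum.symm v (mem_univ v)
  rw [← card_neighborSet_eq_degree] at hdeg
  rw [← Nat.card_coe_set_eq, Nat.card_eq_fintype_card, ← hdeg]

theorem ecc_le_card_sub_two (hG : G.IsUnicyclic) (v : V) : ecc G v ≤ Fintype.card V - 2 := by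
  induction hm : Fintype.card V using Nat.strong_induction_on generalizing V with
  | _ m ih =>
    classical
    have h3 := hG.three_le_card
    rcases hG.exists_neighborSet_eq_singleton_or_isCycles with ⟨u, z, hu⟩ | hcyc
    · have huz := adj_of_neighborSet_eq_singleton hu
      have hG' := hG.induce_compl_singleton hu
      have ih' (v) : ecc (G.induce {u}ᶜ) v ≤ m - 1 - 2 :=
        ih _ (by omega) hG' v (by rw [card_compl_singleton, hm])
      by_cases hv : v = u
      · subst hv
        have := ecc_le_ecc_induce_add_one hG'.connected huz
        have := ih' ⟨z, huz.ne'⟩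
        omega
      · have h1 := ecc_le_max_of_adj hG'.connected huz ⟨v, hv⟩
        dsimp only at h1
        have := ih' ⟨v, hv⟩
        have := dist_le_ecc (G := G.induce {u}ᶜ) ⟨v, hv⟩ ⟨z, huz.ne'⟩
        omega
    · have : Nontrivial V := Fintype.one_lt_card_iff_nontrivial.mp (by omega)
      have := hG.connected.two_mul_ecc_le_of_isCycles hcyc v
      omega

theorem totalEcc_le_tauU₂_of_neighborSet_eq_singleton (hG : G.IsUnicyclic) {u z : V}
    (hu : G.neighborSet u = {z}) : totalEcc G ≤ tauU₂ (Fintype.card V) := by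
  induction hm : Fintype.card V using Nat.strong_induction_on generalizing V u z with
  | _ m ih =>
    classical
    have huz := adj_of_neighborSet_eq_singleton hu
    have hG' := hG.induce_compl_singleton hu
    have hM : Fintype.card ({u}ᶜ : Set V) = m - 1 := by rw [card_compl_singleton, hm]
    have h3 := hG'.three_le_card
    obtain ⟨M, rfl⟩ : ∃ M, m = M + 1 := ⟨m - 1, by omega⟩
    rcases hG'.exists_neighborSet_eq_singleton_or_isCycles with ⟨u', z', hu'⟩ | hcyc
    · have hτ' := ih M (by omega) hG' hu' (by omega)
      have hstep := totalEcc_add_le_of_adj hG'.connected huz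
      have hz := hG'.ecc_le_card_sub_two ⟨z, huz.ne'⟩
      rw [tauU₂_succ (by omega)]
      omega
    · have : Nontrivial ({u}ᶜ : Set V) := Fintype.one_lt_card_iff_nontrivial.mp (by omega)
      have hstep := totalEcc_le_of_adj_of_isCycles hG'.connected huz hcyc
      rw [hM] at hstep
      exact hstep.trans (mul_half_add_half_add_three_le_tauU₂_succ (by omega))

theorem totalEcc_le_tauU₂ (hG : G.IsUnicyclic) (h5 : 5 ≤ Fintype.card V) :
    totalEcc G ≤ tauU₂ (Fintype.card V) := by
  rcases hG.exists_neighborSet_eq_singleton_or_isCycles with ⟨u, z, hu⟩ | hcyc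
  · exact hG.totalEcc_le_tauU₂_of_neighborSet_eq_singleton hu
  · have : Nontrivial V := Fintype.one_lt_card_iff_nontrivial.mp (by omega)
    exact (hG.connected.totalEcc_le_of_isCycles hcyc).trans (mul_half_le_tauU₂ h5)

end IsUnicyclic

end SimpleGraph

def unicyclicU₂ (n : ℕ) (h : 2 < n) : SimpleGraph (Fin n) :=
  pathGraph n ⊔ fromEdgeSet {s(⟨0, by omega⟩, ⟨2, h⟩)}

lemma unicyclicU₂_connected {n : ℕ} (h : 2 < n) : (unicyclicU₂ n h).Connected := by
  obtain ⟨k, rfl⟩ : ∃ k, n = k + 1 := ⟨n - 1, by omega⟩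
  exact (pathGraph_connected k).mono le_sup_left

lemma eccU₂_le_ecc {n : ℕ} (h : 2 < n) (i : Fin n) : eccU₂ n i ≤ ecc (unicyclicU₂ n h) i := by
  let φ : Fin n → ℤ := fun j => if (j : ℕ) = 0 then 2 else j + 1
  have hφ : ∀ a b, (unicyclicU₂ n h).Adj a b → φ a ≤ φ b + 1 := by
    rintro a b (hab | ⟨hab, -⟩)
    · rw [pathGraph_adj] at hab
      simp only [φ]
      split_ifs <;> omega
    · rcases Sym2.eq_iff.mp (Set.mem_singleton_iff.mp hab) with ⟨rfl, rfl⟩ | ⟨rfl, rfl⟩ <;>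
        simp [φ]
  have hconn := unicyclicU₂_connected h
  have hlast := (hconn.preconnected ⟨n - 1, by omega⟩ i).le_add_dist hφ
  have hzero := (hconn.preconnected i ⟨0, by omega⟩).le_add_dist hφ
  have h1 := dist_le_ecc (G := unicyclicU₂ n h) i ⟨n - 1, by omega⟩
  have h2 := dist_le_ecc (G := unicyclicU₂ n h) i ⟨0, by omega⟩
  rw [dist_comm] at hlast
  simp only [φ] at hlast hzero
  unfold eccU₂
  split_ifs at hlast hzero ⊢ <;> omega

lemma tauU₂_le_totalEcc {n : ℕ} (h : 2 < n) : tauU₂ n ≤ totalEcc (unicyclicU₂ n h) := by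
  rw [tauU₂, ← Fin.sum_univ_eq_sum_range]
  exact sum_le_sum fun i _ => eccU₂_le_ecc h i

theorem maximal_unicyclic (n : ℕ) (hn : 5 ≤ n)
    (V : Type) [Fintype V] (G : SimpleGraph V)
    (hcard : Fintype.card V = n)
    (hconn : G.Connected) (hsize : G.edgeSet.ncard = n) :
    totalEcc G ≤
      totalEcc (pathGraph n ⊔
        fromEdgeSet {s((⟨0, by omega⟩ : Fin n), (⟨2, by omega⟩ : Fin n))}) := by
  have hG : G.IsUnicyclic := ⟨hconn, hsize.trans hcard.symm⟩
  calc totalEcc G ≤ tauU₂ n := hcard ▸ hG.totalEcc_le_tauU₂ (hcard ▸ hn)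
    _ ≤ totalEcc (unicyclicU₂ n (by omega)) := tauU₂_le_totalEcc _
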